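/- Let Q be a compact subset of the real line, let d be its diameter, and let λ > 0. Then there exists a function σ : ℝ → ℝ which is infinitely differentiable, sigmoidal, strictly increasing on (−∞, d), λ-strictly increasing on [d, +∞), and satisfies the following property: for every continuous function f on Q and every ε > 0 there exist real numbers c_1, c_2, θ_1, θ_2 such that |f(x) − c_1 σ(x − θ_1) − c_2 σ(x − θ_2)| < ε for all x ∈ Q. -/

import Mathlib

/-!
Take a smooth increasing sigmoid `s < 1` (the logistic function) and a sequence of polynomials
`p₀ = 0, p₁, p₂, …` that is uniformly dense in `C(Q)`, where `Q ⊆ [-r, r]`. To the right of `d`,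
on pairwise disjoint windows `[cₙ - r, cₙ + r]`, a smooth bump replaces `s` by
`1 + δₙ pₙ(t - cₙ)`, so that `δₙ⁻¹ σ(x + cₙ) - δₙ⁻¹ σ(x + c₀) = pₙ(x)` on `Q`. Choosing `δₙ` so
small that `|δₙ pₙ| ≤ 1 - s` on the `n`-th window keeps `|σ - s| ≤ 2 (1 - s)`, which tends to `0`
and is below `λ` once the windows start far enough to the right.
-/

open Polynomial Filter Set Function Metric Topology

theorem locallyFinite_Ici_of_tendsto {ι X : Type*} [TopologicalSpace X] [LinearOrder X]
    [OrderTopology X] [NoMaxOrder X] {l : ι → X} (hl : Tendsto l cofinite atTop) :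
    LocallyFinite fun i => Ici (l i) := by
  intro x
  obtain ⟨y, hxy⟩ := exists_gt x
  refine ⟨Iio y, Iio_mem_nhds hxy, (eventually_cofinite.mp (hl.eventually_ge_atTop y)).subset ?_⟩
  rintro i ⟨z, hiz, hzy⟩ hyi
  exact (hyi.trans hiz).not_gt hzy

section DisjointSupports

variable {ι α M : Type*} [AddCommMonoid M] {f : ι → α → M} {U : ι → Set α}

theorem finsum_apply_eq_of_support_subset_of_pairwise_disjoint (hf : ∀ i, support (f i) ⊆ U i)
    (hU : Pairwise (Disjoint on U)) {i : ι} {x : α} (hx : x ∈ U i) :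
    ∑ᶠ j, f j x = f i x :=
  finsum_eq_single _ i fun j hji => notMem_support.mp fun hj => (hU hji).ne_of_mem (hf j hj) hx rfl

theorem exists_finsum_apply_eq_of_support_subset_of_pairwise_disjoint [Nonempty ι]
    (hf : ∀ i, support (f i) ⊆ U i) (hU : Pairwise (Disjoint on U)) (x : α) :
    ∃ i, ∑ᶠ j, f j x = f i x := by
  by_cases hx : ∃ i, x ∈ U i
  · obtain ⟨i, hi⟩ := hx
    exact ⟨i, finsum_apply_eq_of_support_subset_of_pairwise_disjoint hf hU hi⟩
  · simp only [not_exists] at hx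
    have hzero (j : ι) : f j x = 0 := notMem_support.mp fun hj => hx j (hf j hj)
    exact ⟨Classical.arbitrary ι, by simp [hzero]⟩

end DisjointSupports

theorem IsCompact.exists_pos_mul_abs_le {K : Set ℝ} (hK : IsCompact K) {g : ℝ → ℝ}
    (hg : ContinuousOn g K) {η : ℝ} (hη : 0 < η) : ∃ δ > 0, ∀ y ∈ K, |δ * g y| ≤ η := by
  obtain ⟨C, hC⟩ := hK.exists_bound_of_continuousOn hg
  refine ⟨η / (|C| + 1), by positivity, fun y hy => ?_⟩
  have hgy : |g y| ≤ |C| + 1 := (hC y hy).trans ((le_abs_self C).trans (lt_add_one _).le)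
  rw [abs_mul, abs_of_pos (by positivity)]
  calc η / (|C| + 1) * |g y| ≤ η / (|C| + 1) * (|C| + 1) := by gcongr
    _ = η := div_mul_cancel₀ _ (by positivity)

theorem exists_seq_polynomial_dense_on {Q : Set ℝ} (hQ : IsCompact Q) :
    ∃ p : ℕ → ℝ[X], p 0 = 0 ∧ ∀ f : ℝ → ℝ, ContinuousOn f Q → ∀ ε > 0,
      ∃ n, ∀ x ∈ Q, |f x - (p n).eval x| < ε := by
  have : CompactSpace Q := isCompact_iff_compactSpace.mp hQ
  have hdense : Dense (polynomialFunctions Q : Set C(Q, ℝ)) := by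
    rw [dense_iff_closure_eq, ← Subalgebra.topologicalClosure_coe,
      polynomialFunctions.topologicalClosure, Algebra.coe_top]
  obtain ⟨t, hts, htc, htd⟩ := hdense.exists_countable_dense_subset
  obtain ⟨g, rfl⟩ := htc.exists_eq_range htd.nonempty
  choose q hq using fun n => (polynomialFunctions_coe Q ▸ hts (mem_range_self n) :
    g n ∈ range (toContinuousMapOnAlgHom Q))
  refine ⟨fun n => n.casesOn 0 q, rfl, fun f hf ε hε => ?_⟩
  obtain ⟨n, hn⟩ := Metric.denseRange_iff.mp htd ⟨Q.domRestrict f, hf.domRestrict⟩ ε hε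
  refine ⟨n + 1, fun x hx => ?_⟩
  have := (ContinuousMap.dist_apply_le_dist ⟨x, hx⟩).trans_lt hn
  rw [← hq] at this
  simpa [Real.dist_eq, Set.domRestrict] using this

noncomputable section Windows

variable {r : ℝ} (L : ℝ)

def windowCenter (r L : ℝ) (n : ℕ) : ℝ := L + (2 * n + 1) * (r + 1)

theorem ball_windowCenter_subset (n : ℕ) :
    ball (windowCenter r L n) (r + 1) ⊆ Ioi (L + 2 * n * (r + 1)) := by
  intro t ht
  rw [mem_ball, Real.dist_eq, abs_lt, windowCenter] at ht
  simp only [mem_Ioi]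
  linarith [ht.1]

theorem pairwise_disjoint_ball_windowCenter (hr : 0 < r) :
    Pairwise (Disjoint on fun n => ball (windowCenter r L n) (r + 1)) := by
  have key {m n : ℕ} (hmn : m < n) :
      (r + 1) + (r + 1) ≤ dist (windowCenter r L m) (windowCenter r L n) := by
    have : (m : ℝ) + 1 ≤ n := by exact_mod_cast hmn
    rw [Real.dist_eq, windowCenter, windowCenter, abs_sub_comm, abs_of_nonneg (by nlinarith)]
    nlinarith
  intro m n hmn
  rcases hmn.lt_or_gt with h | h
  · exact ball_disjoint_ball (key h)
  · exact ball_disjoint_ball (dist_comm (windowCenter r L m) _ ▸ key h)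

theorem locallyFinite_ball_windowCenter (hr : 0 < r) :
    LocallyFinite fun n => ball (windowCenter r L n) (r + 1) := by
  refine (locallyFinite_Ici_of_tendsto (l := fun n : ℕ => L + 2 * n * (r + 1)) ?_).subset
    fun n => (ball_windowCenter_subset L n).trans Ioi_subset_Ici_self
  rw [Nat.cofinite_eq_atTop]
  exact tendsto_atTop_add_const_left _ L
    ((tendsto_natCast_atTop_atTop.const_mul_atTop two_pos).atTop_mul_const (by linarith))

variable (hr : 0 < r) (s : ℝ → ℝ) (p : ℕ → ℝ[X]) (δ : ℕ → ℝ)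

def windowBump (n : ℕ) : ContDiffBump (windowCenter r L n) := ⟨r, r + 1, hr, lt_add_one r⟩

def windowCorrection (n : ℕ) (t : ℝ) : ℝ :=
  windowBump L hr n t * (1 - s t + δ n * (p n).eval (t - windowCenter r L n))

def gluedSigmoid (t : ℝ) : ℝ := s t + ∑ᶠ n, windowCorrection L hr s p δ n t

theorem support_windowCorrection_subset (n : ℕ) :
    support (windowCorrection L hr s p δ n) ⊆ ball (windowCenter r L n) (r + 1) :=
  (support_mul_subset_left _ _).trans (windowBump L hr n).support_eq.subset

theorem contDiff_windowCorrection (hs : ContDiff ℝ (⊤ : ℕ∞) s) (n : ℕ) :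
    ContDiff ℝ (⊤ : ℕ∞) (windowCorrection L hr s p δ n) := by
  have hp : ContDiff ℝ (⊤ : ℕ∞) fun y => (p n).eval y := (p n).contDiff_aeval _
  exact (windowBump L hr n).contDiff.mul
    ((contDiff_const.sub hs).add (contDiff_const.mul (hp.comp (contDiff_id.sub contDiff_const))))

theorem contDiff_gluedSigmoid (hs : ContDiff ℝ (⊤ : ℕ∞) s) :
    ContDiff ℝ (⊤ : ℕ∞) (gluedSigmoid L hr s p δ) :=
  hs.add <| contMDiff_iff_contDiff.mp <|
    contMDiff_finsum
      (fun n => contMDiff_iff_contDiff.mpr (contDiff_windowCorrection L hr s p δ hs n))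
      ((locallyFinite_ball_windowCenter L hr).subset (support_windowCorrection_subset L hr s p δ))

theorem gluedSigmoid_eq_of_le {t : ℝ} (ht : t ≤ L) : gluedSigmoid L hr s p δ t = s t := by
  refine add_eq_left.mpr (finsum_eq_zero_of_forall_eq_zero fun n => notMem_support.mp fun hn => ?_)
  have : L + 2 * n * (r + 1) < t :=
    ball_windowCenter_subset L n (support_windowCorrection_subset L hr s p δ n hn)
  nlinarith [(Nat.cast_nonneg n : (0 : ℝ) ≤ n)]

theorem gluedSigmoid_eq_of_mem_closedBall {n : ℕ} {t : ℝ}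
    (ht : t ∈ closedBall (windowCenter r L n) r) :
    gluedSigmoid L hr s p δ t = 1 + δ n * (p n).eval (t - windowCenter r L n) := by
  rw [gluedSigmoid, finsum_apply_eq_of_support_subset_of_pairwise_disjoint
    (support_windowCorrection_subset L hr s p δ) (pairwise_disjoint_ball_windowCenter L hr)
    (closedBall_subset_ball (lt_add_one r) ht), windowCorrection,
    (windowBump L hr n).one_of_mem_closedBall ht]
  ring

theorem inv_mul_gluedSigmoid_sub_eq_eval (hp : p 0 = 0) {n : ℕ} (hδ : δ n ≠ 0) {x : ℝ}
    (hx : x ∈ closedBall 0 r) :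
    (δ n)⁻¹ * gluedSigmoid L hr s p δ (x + windowCenter r L n)
      - (δ n)⁻¹ * gluedSigmoid L hr s p δ (x + windowCenter r L 0) = (p n).eval x := by
  have hmem (k : ℕ) : x + windowCenter r L k ∈ closedBall (windowCenter r L k) r := by
    simpa [dist_eq_norm] using hx
  rw [gluedSigmoid_eq_of_mem_closedBall L hr s p δ (hmem n),
    gluedSigmoid_eq_of_mem_closedBall L hr s p δ (hmem 0), hp, eval_zero, mul_zero, add_zero,
    add_sub_cancel_right]
  field_simp
  ring

theorem abs_windowCorrection_le (hmono : Monotone s) (hle : ∀ t, s t ≤ 1)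
    (hδ : ∀ n, ∀ y ∈ closedBall 0 (r + 1),
      |δ n * (p n).eval y| ≤ 1 - s (windowCenter r L n + (r + 1)))
    (n : ℕ) (t : ℝ) : |windowCorrection L hr s p δ n t| ≤ 2 * (1 - s t) := by
  by_cases ht : t ∈ ball (windowCenter r L n) (r + 1)
  · have hy : t - windowCenter r L n ∈ closedBall 0 (r + 1) := by
      simpa [dist_eq_norm] using ball_subset_closedBall ht
    have hst : s t ≤ s (windowCenter r L n + (r + 1)) := by
      rw [mem_ball, Real.dist_eq, abs_lt] at ht
      exact hmono (by linarith [ht.2])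
    have hbump : |windowBump L hr n t| ≤ 1 := by
      rw [abs_of_nonneg (windowBump L hr n).nonneg]; exact (windowBump L hr n).le_one
    calc |windowCorrection L hr s p δ n t|
        = |windowBump L hr n t| * |(1 - s t) + δ n * (p n).eval (t - windowCenter r L n)| := by
          rw [windowCorrection, abs_mul]
      _ ≤ 1 * ((1 - s t) + (1 - s t)) := by
          gcongr
          refine (abs_add_le _ _).trans (add_le_add (abs_of_nonneg (sub_nonneg.2 (hle t))).le ?_)
          exact (hδ n _ hy).trans (by linarith)
      _ = 2 * (1 - s t) := by ring
  · rw [notMem_support.mp fun h => ht (support_windowCorrection_subset L hr s p δ n h), abs_zero]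
    linarith [hle t]

theorem abs_gluedSigmoid_sub_le (hmono : Monotone s) (hle : ∀ t, s t ≤ 1)
    (hδ : ∀ n, ∀ y ∈ closedBall 0 (r + 1),
      |δ n * (p n).eval y| ≤ 1 - s (windowCenter r L n + (r + 1)))
    (t : ℝ) : |gluedSigmoid L hr s p δ t - s t| ≤ 2 * (1 - s t) := by
  obtain ⟨n, hn⟩ := exists_finsum_apply_eq_of_support_subset_of_pairwise_disjoint
    (support_windowCorrection_subset L hr s p δ) (pairwise_disjoint_ball_windowCenter L hr) t
  rw [gluedSigmoid, add_sub_cancel_left, hn]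
  exact abs_windowCorrection_le L hr s p δ hmono hle hδ n t

end Windows

theorem exists_contDiff_eqOn_Iio_approx_two_shifts {s : ℝ → ℝ} (hs : ContDiff ℝ (⊤ : ℕ∞) s)
    (hmono : Monotone s) (hlt : ∀ t, s t < 1) (hlim : Tendsto s atTop (𝓝 1))
    {Q : Set ℝ} (hQ : IsCompact Q) (T : ℝ) {lam : ℝ} (hlam : 0 < lam) :
    ∃ σ : ℝ → ℝ, ContDiff ℝ (⊤ : ℕ∞) σ ∧ EqOn σ s (Iio T) ∧ (∀ t, |σ t - s t| ≤ lam) ∧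
      Tendsto σ atTop (𝓝 1) ∧
      ∀ f : ℝ → ℝ, ContinuousOn f Q → ∀ ε > 0, ∃ c₁ c₂ θ₁ θ₂ : ℝ,
        ∀ x ∈ Q, |f x - c₁ * σ (x - θ₁) - c₂ * σ (x - θ₂)| < ε := by
  have hle (t : ℝ) : s t ≤ 1 := (hlt t).le
  obtain ⟨r, hr, hQr⟩ : ∃ r > 0, Q ⊆ closedBall 0 r := by
    obtain ⟨r, hQr⟩ := hQ.isBounded.subset_closedBall 0
    exact ⟨max r 1, by positivity, hQr.trans (closedBall_subset_closedBall (le_max_left r 1))⟩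
  obtain ⟨L, hTL, hL⟩ : ∃ L, T ≤ L ∧ 2 * (1 - s L) ≤ lam := by
    obtain ⟨N, hN⟩ :=
      (hlim.eventually_const_le (by linarith : 1 - lam / 2 < 1)).exists_forall_of_atTop
    exact ⟨max N T, le_max_right N T, by linarith [hN _ (le_max_left N T)]⟩
  obtain ⟨p, hp0, hp⟩ := exists_seq_polynomial_dense_on hQ
  choose δ hδpos hδ using fun n => (isCompact_closedBall (0 : ℝ) (r + 1)).exists_pos_mul_abs_le
    (p n).continuous.continuousOn (sub_pos.2 (hlt (windowCenter r L n + (r + 1))))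
  have hdiff := abs_gluedSigmoid_sub_le L hr s p δ hmono hle hδ
  refine ⟨gluedSigmoid L hr s p δ, contDiff_gluedSigmoid L hr s p δ hs,
    fun t ht => gluedSigmoid_eq_of_le L hr s p δ ((mem_Iio.mp ht).le.trans hTL),
    fun t => ?_, ?_, ?_⟩
  · rcases le_or_gt t L with htL | hLt
    · rw [gluedSigmoid_eq_of_le L hr s p δ htL, sub_self, abs_zero]; exact hlam.le
    · linarith [hdiff t, hmono hLt.le]
  · have hbound : Tendsto (fun t => 2 * (1 - s t)) atTop (𝓝 0) := by
      simpa using (tendsto_const_nhds (x := (1 : ℝ)) |>.sub hlim).const_mul (2 : ℝ)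
    simpa using hlim.add (squeeze_zero_norm hdiff hbound)
  · intro f hf ε hε
    obtain ⟨n, hn⟩ := hp f hf ε hε
    refine ⟨(δ n)⁻¹, -(δ n)⁻¹, -windowCenter r L n, -windowCenter r L 0, fun x hx => ?_⟩
    convert hn x hx using 2
    rw [← inv_mul_gluedSigmoid_sub_eq_eval L hr s p δ hp0 (hδpos n).ne' (hQr hx),
      sub_neg_eq_add, sub_neg_eq_add]
    ring

theorem stmt19_general (Q : Set ℝ) (hQ : IsCompact Q) (lam : ℝ) (hlam : 0 < lam)
    (d : ℝ) :
    ∃ σ : ℝ → ℝ,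
      ContDiff ℝ (⊤ : ℕ∞) σ ∧
      Filter.Tendsto σ Filter.atBot (nhds 0) ∧
      Filter.Tendsto σ Filter.atTop (nhds 1) ∧
      StrictMonoOn σ (Set.Iio d) ∧
      (∃ u : ℝ → ℝ, StrictMonoOn u (Set.Ici d) ∧ ∀ x ∈ Set.Ici d, |σ x - u x| ≤ lam) ∧
      (∀ f : ℝ → ℝ, ContinuousOn f Q → ∀ ε : ℝ, 0 < ε →
        ∃ c1 c2 θ1 θ2 : ℝ,
          ∀ x ∈ Q, |f x - c1 * σ (x - θ1) - c2 * σ (x - θ2)| < ε) := by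
  obtain ⟨σ, hσ, hσs, hσlam, hσtop, happrox⟩ := exists_contDiff_eqOn_Iio_approx_two_shifts
    (contDiff_sigmoid.of_le le_top) Real.sigmoid_monotone Real.sigmoid_lt_one
    Real.tendsto_sigmoid_atTop hQ d hlam
  refine ⟨σ, hσ, ?_, hσtop, (Real.sigmoid_strictMono.strictMonoOn _).congr hσs.symm,
    ⟨Real.sigmoid, Real.sigmoid_strictMono.strictMonoOn _, fun x _ => hσlam x⟩, happrox⟩
  exact Real.tendsto_sigmoid_atBot.congr' ((eventually_lt_atBot d).mono fun t ht => (hσs ht).symm)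

/-- For a compact set `Q ⊆ ℝ` with diameter `d` and any `λ > 0`, there is an
infinitely differentiable sigmoidal function `σ : ℝ → ℝ`, strictly increasing
on `(-∞, d)` and `λ`-strictly increasing on `[d, +∞)`, such that every
continuous function on `Q` can be approximated within any `ε > 0` by
`c₁σ(x − θ₁) + c₂σ(x − θ₂)`. -/
theorem stmt19 (Q : Set ℝ) (hQ : IsCompact Q) (lam : ℝ) (hlam : 0 < lam)
    (d : ℝ) (hd : d = Metric.diam Q) :
    ∃ σ : ℝ → ℝ,
      ContDiff ℝ (⊤ : ℕ∞) σ ∧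
      Filter.Tendsto σ Filter.atBot (nhds 0) ∧
      Filter.Tendsto σ Filter.atTop (nhds 1) ∧
      StrictMonoOn σ (Set.Iio d) ∧
      (∃ u : ℝ → ℝ, StrictMonoOn u (Set.Ici d) ∧ ∀ x ∈ Set.Ici d, |σ x - u x| ≤ lam) ∧
      (∀ f : ℝ → ℝ, ContinuousOn f Q → ∀ ε : ℝ, 0 < ε →
        ∃ c1 c2 θ1 θ2 : ℝ,
          ∀ x ∈ Q, |f x - c1 * σ (x - θ1) - c2 * σ (x - θ2)| < ε) :=
  stmt19_general Q hQ lam hlam d
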